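/- arXiv:1910.14367 — 7 statements merged into one kernel-verified Lean document; each statement's English description precedes it below -/
import Mathlib

section
/- For k ∈ (0,1) and q, s ∈ [0,1] with q > s, the belief update function Φ(b) = ((q·b + s·(1-b))·(1-k)) / ((q·b + s·(1-b))·(1-k) + (1-q)·b + (1-s)·(1-b)) is strictly increasing in b on [0,1]. -/
/-!
Numerator and denominator of `Φ` are both affine in `b`: `Φ` is the Möbius map
`b ↦ ((1-k)s + (1-k)(q-s) b) / ((1 - k s) - k(q-s) b)`, whose determinant collapses to
`(1-k)(q-s) > 0`. A Möbius map with positive determinant increases wherever its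
denominator is positive.
-/

theorem strictMonoOn_affine_div_affine {𝕜 : Type*} [Field 𝕜] [LinearOrder 𝕜]
    [IsStrictOrderedRing 𝕜] {a b c d : 𝕜} {S : Set 𝕜} (hdet : 0 < b * c - a * d)
    (hden : ∀ x ∈ S, 0 < c + d * x) :
    StrictMonoOn (fun x => (a + b * x) / (c + d * x)) S := by
  intro x hx y hy hxy
  rw [div_lt_div_iff₀ (hden x hx) (hden y hy)]
  linear_combination mul_pos hdet (sub_pos.2 hxy)

theorem phi_strictMonoOn_general
    (q s k : ℝ) (hk1 : k < 1) (hsq : s < q)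
    (hden : ∀ b ∈ Set.Icc (0:ℝ) 1,
      0 < (q*b + s*(1-b))*(1-k) + (1-q)*b + (1-s)*(1-b)) :
    StrictMonoOn
      (fun b : ℝ =>
        ((q*b + s*(1-b))*(1-k)) /
          ((q*b + s*(1-b))*(1-k) + (1-q)*b + (1-s)*(1-b)))
      (Set.Icc (0:ℝ) 1) := by
  have hmobius : (fun b : ℝ =>
      ((q*b + s*(1-b))*(1-k)) / ((q*b + s*(1-b))*(1-k) + (1-q)*b + (1-s)*(1-b))) =
      fun b => ((1-k)*s + (1-k)*(q-s) * b) / ((1 - k*s) + -(k*(q-s)) * b) := by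
    funext b
    congr 1 <;> ring
  have hdet : 0 < (1-k)*(q-s) * (1 - k*s) - (1-k)*s * -(k*(q-s)) := by
    linear_combination mul_pos (sub_pos.2 hk1) (sub_pos.2 hsq)
  rw [hmobius]
  exact strictMonoOn_affine_div_affine hdet fun b hb => by linear_combination hden b hb

/-- The failed-ACK belief update
`Φ(b) = ((q·b + s·(1-b))·(1-k)) / ((q·b + s·(1-b))·(1-k) + (1-q)·b + (1-s)·(1-b))`
is strictly increasing in `b` on `[0,1]`, for `k ∈ (0,1)`, `0 ≤ s < q ≤ 1`,
assuming the denominator is positive on `[0,1]`. -/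
theorem phi_strictMonoOn
    (q s k : ℝ) (hk0 : 0 < k) (hk1 : k < 1) (hs : 0 ≤ s) (hsq : s < q) (hq : q ≤ 1)
    (hden : ∀ b ∈ Set.Icc (0:ℝ) 1,
      0 < (q*b + s*(1-b))*(1-k) + (1-q)*b + (1-s)*(1-b)) :
    StrictMonoOn
      (fun b : ℝ =>
        ((q*b + s*(1-b))*(1-k)) /
          ((q*b + s*(1-b))*(1-k) + (1-q)*b + (1-s)*(1-b)))
      (Set.Icc (0:ℝ) 1) :=
  phi_strictMonoOn_general q s k hk1 hsq hden
end

section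
/- If q > s and 0 < k < 1, then setting b₀ = 1 and b_{m+1} = Φ(b_m) where Φ is the failed-ACK belief update, the sequence (b_m) is strictly decreasing. In particular b₁ = (q - q·k)/(1 - q·k) < 1. -/
/-!
Write the failed-ACK update as `Φ = post ∘ pred`, where `pred b = q b + s (1 - b)` is the
predicted probability that the channel is good in the next slot and
`post x = x (1 - k) / (x (1 - k) + (1 - x))` is Bayes' rule after a failed ACK.
Both maps send `[0, 1]` into itself and are strictly increasing there (`pred` because `s < q`,
`post` because `k < 1`), hence so is `Φ`. Since `Φ 1 = (q - q k) / (1 - q k) < 1`, the orbit of `1`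
under a strictly increasing self-map of `[0, 1]` is strictly decreasing.
-/

open Set

theorem strictAnti_of_succ_eq_of_strictMonoOn {α : Type*} [Preorder α] {f : α → α} {t : Set α}
    (hf : StrictMonoOn f t) (hft : MapsTo f t t) {b : ℕ → α} (hb : ∀ n, b (n + 1) = f (b n))
    (h0 : b 0 ∈ t) (h1 : b 1 < b 0) : StrictAnti b := by
  have hmem : ∀ n, b n ∈ t := by
    intro n
    induction n with
    | zero => exact h0
    | succ n ih => exact hb n ▸ hft ih
  refine strictAnti_nat_of_succ_lt fun n => ?_
  induction n with
  | zero => exact h1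
  | succ n ih =>
    calc b (n + 2) = f (b (n + 1)) := hb (n + 1)
      _ < f (b n) := hf (hmem (n + 1)) (hmem n) ih
      _ = b (n + 1) := (hb n).symm

namespace AckFailure

def predictedGood (q s b : ℝ) : ℝ := q * b + s * (1 - b)

noncomputable def failurePosterior (k x : ℝ) : ℝ := x * (1 - k) / (x * (1 - k) + (1 - x))

theorem update_eq_failurePosterior_predictedGood (q s k b : ℝ) :
    ((q * b + s * (1 - b)) * (1 - k)) /
        ((q * b + s * (1 - b)) * (1 - k) + (1 - q) * b + (1 - s) * (1 - b)) =
      failurePosterior k (predictedGood q s b) := by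
  unfold failurePosterior predictedGood
  ring

theorem predictedGood_strictMono {q s : ℝ} (hsq : s < q) : StrictMono (predictedGood q s) :=
  fun x y hxy => by unfold predictedGood; nlinarith

theorem predictedGood_mapsTo {q s : ℝ} (hq : q ∈ Icc 0 1) (hs : s ∈ Icc 0 1) :
    MapsTo (predictedGood q s) (Icc 0 1) (Icc 0 1) := by
  rintro b ⟨hb0, hb1⟩
  obtain ⟨hq0, hq1⟩ := hq
  obtain ⟨hs0, hs1⟩ := hs
  unfold predictedGood
  constructor <;> nlinarith

section Posterior

variable {k : ℝ} (hk : k < 1)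
include hk

theorem failurePosterior_denom_pos {x : ℝ} (hx : x ∈ Icc 0 1) : 0 < x * (1 - k) + (1 - x) := by
  obtain ⟨hx0, hx1⟩ := hx
  rcases le_or_gt k 0 with hk0 | hk0 <;> nlinarith

theorem failurePosterior_strictMonoOn : StrictMonoOn (failurePosterior k) (Icc 0 1) := by
  intro x hx y hy hxy
  unfold failurePosterior
  rw [div_lt_div_iff₀ (failurePosterior_denom_pos hk hx) (failurePosterior_denom_pos hk hy)]
  -- the cross difference is `(1 - k) (y - x)`
  nlinarith [mul_pos (sub_pos.2 hk) (sub_pos.2 hxy)]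

theorem failurePosterior_mapsTo : MapsTo (failurePosterior k) (Icc 0 1) (Icc 0 1) := by
  intro x hx
  have hden := failurePosterior_denom_pos hk hx
  obtain ⟨hx0, hx1⟩ := hx
  refine ⟨div_nonneg (mul_nonneg hx0 (sub_pos.2 hk).le) hden.le, ?_⟩
  rw [failurePosterior, div_le_one hden]
  linarith

end Posterior

end AckFailure

open AckFailure in
theorem belief_strictAnti_under_ack_failures_general
    (q s k : ℝ) (hq1 : q < 1) (hs : 0 ≤ s) (hsq : s < q)
    (hk1 : k < 1)
    (b : ℕ → ℝ) (hb0 : b 0 = 1)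
    (hbrec : ∀ m, b (m+1) =
      ((q * b m + s*(1 - b m))*(1-k)) /
        ((q * b m + s*(1 - b m))*(1-k) + (1-q)*(b m) + (1-s)*(1 - b m))) :
    StrictAnti b ∧ b 1 = (q - q*k)/(1 - q*k) ∧ b 1 < 1 := by
  have hΦ : ∀ m, b (m + 1) = (failurePosterior k ∘ predictedGood q s) (b m) := fun m =>
    (hbrec m).trans (update_eq_failurePosterior_predictedGood q s k (b m))
  have hb1 : b 1 = (q - q * k) / (1 - q * k) := by
    rw [hΦ 0, hb0]
    simp only [Function.comp, predictedGood, failurePosterior]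
    ring_nf
  have hb1_lt : b 1 < 1 := by
    rw [hb1, div_lt_one (by nlinarith)]
    nlinarith
  have hpred : MapsTo (predictedGood q s) (Icc 0 1) (Icc 0 1) :=
    predictedGood_mapsTo ⟨by linarith, hq1.le⟩ ⟨hs, by linarith⟩
  have hmono : StrictMonoOn (failurePosterior k ∘ predictedGood q s) (Icc 0 1) :=
    (failurePosterior_strictMonoOn hk1).comp ((predictedGood_strictMono hsq).strictMonoOn _)
      hpred
  have hmaps : MapsTo (failurePosterior k ∘ predictedGood q s) (Icc 0 1) (Icc 0 1) :=
    (failurePosterior_mapsTo hk1).comp hpred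
  refine ⟨strictAnti_of_succ_eq_of_strictMonoOn hmono hmaps hΦ ?_ (hb0 ▸ hb1_lt), hb1, hb1_lt⟩
  rw [hb0]
  exact right_mem_Icc.2 zero_le_one

/-- Starting from belief `b₀ = 1` and iterating the failed-ACK belief
update `Φ`, the belief sequence is strictly decreasing; in particular
`b₁ = (q - q·k)/(1 - q·k) < 1`. Here `0 ≤ s < q < 1` and `k ∈ (0,1)`. -/
theorem belief_strictAnti_under_ack_failures
    (q s k : ℝ) (hq0 : 0 < q) (hq1 : q < 1) (hs : 0 ≤ s) (hsq : s < q)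
    (hk0 : 0 < k) (hk1 : k < 1)
    (b : ℕ → ℝ) (hb0 : b 0 = 1)
    (hbrec : ∀ m, b (m+1) =
      ((q * b m + s*(1 - b m))*(1-k)) /
        ((q * b m + s*(1 - b m))*(1-k) + (1-q)*(b m) + (1-s)*(1 - b m))) :
    StrictAnti b ∧ b 1 = (q - q*k)/(1 - q*k) ∧ b 1 < 1 :=
  belief_strictAnti_under_ack_failures_general q s k hq1 hs hsq hk1 b hb0 hbrec
end

section
/- If J_{l+1}(b) = min_{i=1..n}(η_i + β_i·b) is a finite minimum of affine functions, then the composed map b ↦ (1 - (q·b + s·(1-b))·k) · J_{l+1}(Φ(b)), where Φ(b) = ((q·b + s·(1-b))·(1-k)) / (1 - (q·b + s·(1-b))·k), equals min_{i=1..n} [ η_i·(1 - (q·b + s·(1-b))·k) + β_i·(q·b + s·(1-b))·(1-k) ], and is therefore a finite minimum of affine functions of b, hence concave on [0,1]. -/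
/-! Since the denominator is positive it can be pulled inside the infimum, where it cancels
the division in `Φ(b)`. Each term is then affine in `b`, and a finite infimum of affine
functions is concave. -/

theorem ConcaveOn.ciInf {𝕜 E β ι : Type*} [Semiring 𝕜] [PartialOrder 𝕜] [AddCommMonoid E] [SMul 𝕜 E]
    [ConditionallyCompleteLinearOrder β] [AddCommMonoid β] [IsOrderedAddMonoid β] [Module 𝕜 β]
    [PosSMulMono 𝕜 β] [Finite ι] {s : Set E} {f : ι → E → β} (hs : Convex 𝕜 s)
    (hf : ∀ i, ConcaveOn 𝕜 s (f i)) : ConcaveOn 𝕜 s fun x => ⨅ i, f i x := by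
  rcases isEmpty_or_nonempty ι with hι | hι
  -- over an empty index the infimum is the constant `sInf ∅`
  · simpa only [iInf_of_isEmpty] using concaveOn_const _ hs
  refine ⟨hs, fun x hx y hy a b ha hb hab => le_ciInf fun i => ?_⟩
  calc a • (⨅ j, f j x) + b • (⨅ j, f j y) ≤ a • f i x + b • f i y :=
        add_le_add (smul_le_smul_of_nonneg_left (ciInf_le (Set.finite_range _).bddBelow i) ha)
          (smul_le_smul_of_nonneg_left (ciInf_le (Set.finite_range _).bddBelow i) hb)
    _ ≤ f i (a • x + b • y) := (hf i).2 hx hy ha hb hab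

theorem concaveOn_const_add_mul (u v : ℝ) {s : Set ℝ} (hs : Convex ℝ s) :
    ConcaveOn ℝ s fun x => u + v * x :=
  ⟨hs, fun _ _ _ _ a b _ _ hab => le_of_eq (by simp only [smul_eq_mul]; linear_combination u * hab)⟩

theorem mul_iInf_add_mul_div {ι : Type*} (η β : ι → ℝ) {c : ℝ} (hc : 0 < c) (x : ℝ) :
    c * ⨅ i, (η i + β i * (x / c)) = ⨅ i, (η i * c + β i * x) := by
  rw [Real.mul_iInf_of_nonneg hc.le]
  congr 1 with i
  field_simp

theorem weighted_value_after_update_is_min_of_affine_general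
    (n : ℕ) (η β : Fin n → ℝ)
    (q s k : ℝ)
    (hden : ∀ b ∈ Set.Icc (0:ℝ) 1, 0 < 1 - (q*b + s*(1-b))*k) :
    (∀ b ∈ Set.Icc (0:ℝ) 1,
      (1 - (q*b + s*(1-b))*k) *
        (⨅ i : Fin n, (η i + β i * (((q*b + s*(1-b))*(1-k)) / (1 - (q*b + s*(1-b))*k))))
      = ⨅ i : Fin n, (η i * (1 - (q*b + s*(1-b))*k) + β i * ((q*b + s*(1-b))*(1-k)))) ∧
    ConcaveOn ℝ (Set.Icc (0:ℝ) 1)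
      (fun b : ℝ => (1 - (q*b + s*(1-b))*k) *
        (⨅ i : Fin n, (η i + β i * (((q*b + s*(1-b))*(1-k)) / (1 - (q*b + s*(1-b))*k))))) := by
  have hmin (b : ℝ) (hb : b ∈ Set.Icc (0:ℝ) 1) :=
    mul_iInf_add_mul_div η β (hden b hb) ((q*b + s*(1-b))*(1-k))
  refine ⟨hmin, ConcaveOn.congr ?_ fun b hb => (hmin b hb).symm⟩
  refine ConcaveOn.ciInf (convex_Icc 0 1) fun i => ?_
  exact (concaveOn_const_add_mul (η i * (1 - s*k) + β i * (s*(1-k)))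
    ((q - s) * (β i * (1-k) - η i * k)) (convex_Icc 0 1)).congr fun b _ => by ring

/-- If `J_{l+1}(b) = min_i (η i + β i · b)` is a finite minimum of affine
functions, then `b ↦ (1 - (q·b+s·(1-b))·k) · J_{l+1}(Φ(b))`, with
`Φ(b) = ((q·b+s·(1-b))·(1-k)) / (1 - (q·b+s·(1-b))·k)`, equals
`min_i [η i·(1 - (q·b+s·(1-b))·k) + β i·(q·b+s·(1-b))·(1-k)]` on `[0,1]`,
and hence is concave on `[0,1]`. -/
theorem weighted_value_after_update_is_min_of_affine
    (n : ℕ) (hn : 0 < n) (η β : Fin n → ℝ)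
    (q s k : ℝ) (hq : q ∈ Set.Icc (0:ℝ) 1) (hs : s ∈ Set.Icc (0:ℝ) 1)
    (hk : k ∈ Set.Icc (0:ℝ) 1)
    (hden : ∀ b ∈ Set.Icc (0:ℝ) 1, 0 < 1 - (q*b + s*(1-b))*k) :
    (∀ b ∈ Set.Icc (0:ℝ) 1,
      (1 - (q*b + s*(1-b))*k) *
        (⨅ i : Fin n, (η i + β i * (((q*b + s*(1-b))*(1-k)) / (1 - (q*b + s*(1-b))*k))))
      = ⨅ i : Fin n, (η i * (1 - (q*b + s*(1-b))*k) + β i * ((q*b + s*(1-b))*(1-k)))) ∧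
    ConcaveOn ℝ (Set.Icc (0:ℝ) 1)
      (fun b : ℝ => (1 - (q*b + s*(1-b))*k) *
        (⨅ i : Fin n, (η i + β i * (((q*b + s*(1-b))*(1-k)) / (1 - (q*b + s*(1-b))*k))))) :=
  weighted_value_after_update_is_min_of_affine_general n η β q s k hden
end

section
/- Define the terminal cost J_{N-1}(b) = (1 - k·b)·C and recursively J_l(b) = min{ C , (1 - k·b)·C + (q·b + s·(1-b))·k·J_{l+1}(1) + (1 - (q·b + s·(1-b))·k)·J_{l+1}(Φ(b)) } where Φ(b) = ((q·b + s·(1-b))·(1-k))/(1 - (q·b + s·(1-b))·k). Then for every l < N-1, J_l is concave and piecewise linear (a finite minimum of affine functions) on [0,1]. -/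
/-!
Write `p(b) = q·b + s·(1-b)` and `Φ(b) = p(b)(1-k) / (1 - p(b)k)`. The belief update `Φ` maps
`[0,1]` into itself, and the weight in front of `J_{l+1}(Φ(b))` is exactly the denominator of
`Φ(b)`, so for an affine `g(x) = η + β·x` the product `(1 - p(b)k)·g(Φ(b)) = η(1 - p(b)k) + β p(b)(1-k)`
is again affine in `b`. Since multiplying by a positive number commutes with taking minima,
`(1 - p k)·J_{l+1}(Φ)` is a finite minimum of affine functions whenever `J_{l+1}` is; adding the
affine stage cost and taking the minimum with `C` keeps this form. Backward induction from the
affine terminal cost then shows that every `J_l` is a finite minimum of affine functions, hence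
concave.
-/

open Set

theorem min_ciInf_eq_ciInf_cons {α : Type*} [ConditionallyCompleteLinearOrder α] {n : ℕ}
    [NeZero n] (a : α) (f : Fin n → α) :
    min a (⨅ i, f i) = ⨅ i, (Fin.cons a f : Fin (n + 1) → α) i := by
  refine le_antisymm (le_ciInf fun i => ?_) (le_min ?_ ?_)
  · induction i using Fin.cases with
    | zero => exact min_le_left _ _
    | succ i => exact (min_le_right _ _).trans (ciInf_le (finite_range f).bddBelow i)
  · exact ciInf_le (finite_range _).bddBelow 0
  · exact le_ciInf fun i => ciInf_le (finite_range _).bddBelow i.succ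

theorem concaveOn_ciInf {E ι : Type*} [AddCommMonoid E] [Module ℝ E] [Finite ι] [Nonempty ι]
    {s : Set E} {g : ι → E → ℝ} (hg : ∀ i, ConcaveOn ℝ s (g i)) :
    ConcaveOn ℝ s fun x => ⨅ i, g i x := by
  refine ⟨(hg (Classical.arbitrary ι)).1, fun x hx y hy a b ha hb hab => le_ciInf fun i => ?_⟩
  calc a • (⨅ i, g i x) + b • ⨅ i, g i y ≤ a • g i x + b • g i y := by
        gcongr <;> exact ciInf_le (finite_range _).bddBelow i
    _ ≤ g i (a • x + b • y) := (hg i).2 hx hy ha hb hab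

theorem concaveOn_affine {s : Set ℝ} (hs : Convex ℝ s) (η β : ℝ) :
    ConcaveOn ℝ s fun x => η + β * x :=
  (concaveOn_const η hs).add ((LinearMap.mulLeft ℝ β).concaveOn hs)

def IsMinOfAffineOn (s : Set ℝ) (f : ℝ → ℝ) : Prop :=
  ∃ n : ℕ, 0 < n ∧ ∃ η β : Fin n → ℝ, ∀ b ∈ s, f b = ⨅ i : Fin n, (η i + β i * b)

namespace IsMinOfAffineOn

variable {s t : Set ℝ} {f : ℝ → ℝ}

theorem of_affine (η β : ℝ) : IsMinOfAffineOn s fun b => η + β * b :=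
  ⟨1, one_pos, fun _ => η, fun _ => β, fun _ _ => ciInf_const.symm⟩

theorem congr {g : ℝ → ℝ} (hf : IsMinOfAffineOn s f) (hfg : EqOn f g s) :
    IsMinOfAffineOn s g := by
  obtain ⟨n, hn, η, β, hf⟩ := hf
  exact ⟨n, hn, η, β, fun b hb => (hfg hb).symm.trans (hf b hb)⟩

theorem concaveOn (hs : Convex ℝ s) (hf : IsMinOfAffineOn s f) : ConcaveOn ℝ s f := by
  obtain ⟨n, hn, η, β, hf⟩ := hf
  have : Nonempty (Fin n) := Fin.pos_iff_nonempty.mp hn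
  exact (concaveOn_ciInf fun i => concaveOn_affine hs (η i) (β i)).congr fun b hb => (hf b hb).symm

theorem min_const (c : ℝ) (hf : IsMinOfAffineOn s f) :
    IsMinOfAffineOn s fun b => min c (f b) := by
  obtain ⟨n, hn, η, β, hf⟩ := hf
  have : NeZero n := ⟨hn.ne'⟩
  refine ⟨n + 1, n.succ_pos, Fin.cons c η, Fin.cons 0 β, fun b hb => ?_⟩
  dsimp only
  rw [hf b hb, min_ciInf_eq_ciInf_cons]
  exact iInf_congr <| Fin.cases (by simp) (by simp)

theorem affine_add_perspective {a u w : ℝ → ℝ} {a₀ a₁ u₀ u₁ w₀ w₁ : ℝ}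
    (hf : IsMinOfAffineOn t f) (ha : ∀ b, a b = a₀ + a₁ * b) (hu : ∀ b, u b = u₀ + u₁ * b)
    (hw : ∀ b, w b = w₀ + w₁ * b) (hw_pos : ∀ b ∈ s, 0 < w b) (hmaps : ∀ b ∈ s, u b / w b ∈ t) :
    IsMinOfAffineOn s fun b => a b + w b * f (u b / w b) := by
  obtain ⟨n, hn, η, β, hf⟩ := hf
  have : Nonempty (Fin n) := Fin.pos_iff_nonempty.mp hn
  refine ⟨n, hn, fun i => a₀ + η i * w₀ + β i * u₀, fun i => a₁ + η i * w₁ + β i * u₁,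
    fun b hb => ?_⟩
  have hwb := hw_pos b hb
  have hmono : Monotone fun x => a b + w b * x := fun x y hxy => by dsimp only; gcongr
  dsimp only
  rw [hf _ (hmaps b hb), hmono.map_ciInf_of_continuousAt (by fun_prop) (finite_range _).bddBelow]
  refine iInf_congr fun i => ?_
  rw [mul_add, mul_left_comm, mul_div_cancel₀ _ hwb.ne', ha, hu, hw]
  ring

end IsMinOfAffineOn

theorem posterior_mem_Icc {p k : ℝ} (hp : p ∈ Icc (0 : ℝ) 1) (hk : k ≤ 1) (hd : 0 < 1 - p * k) :
    p * (1 - k) / (1 - p * k) ∈ Icc (0 : ℝ) 1 :=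
  ⟨div_nonneg (mul_nonneg hp.1 (sub_nonneg.2 hk)) hd.le, (div_le_one hd).2 (by linarith [hp.2])⟩

theorem value_functions_concave_piecewise_linear_general
    (C q s k : ℝ) (hs0 : 0 ≤ s) (hsq : s < q) (hq1 : q ≤ 1)
    (hk1 : k < 1)
    (hden : ∀ b ∈ Set.Icc (0:ℝ) 1, 0 < 1 - (q*b + s*(1-b))*k)
    (J : ℕ → ℝ → ℝ)
    (hJ0 : ∀ b : ℝ, J 0 b = (1 - k*b)*C)
    (hJrec : ∀ m : ℕ, ∀ b : ℝ, J (m+1) b =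
      min C ((1 - k*b)*C + (q*b + s*(1-b))*k * J m 1 +
        (1 - (q*b + s*(1-b))*k) *
          J m (((q*b + s*(1-b))*(1-k)) / (1 - (q*b + s*(1-b))*k)))) :
    ∀ m : ℕ,
      ConcaveOn ℝ (Set.Icc (0:ℝ) 1) (J (m+1)) ∧
      ∃ n : ℕ, 0 < n ∧ ∃ η β : Fin n → ℝ,
        ∀ b ∈ Set.Icc (0:ℝ) 1, J (m+1) b = ⨅ i : Fin n, (η i + β i * b) := by
  have hbelief : ∀ b ∈ Icc (0 : ℝ) 1, q*b + s*(1-b) ∈ Icc (0 : ℝ) 1 := fun b ⟨hb0, hb1⟩ =>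
    ⟨by nlinarith, by nlinarith⟩
  have hJ : ∀ m, IsMinOfAffineOn (Icc 0 1) (J m) := by
    intro m
    induction m with
    | zero => exact (IsMinOfAffineOn.of_affine C (-(k*C))).congr fun b _ => by rw [hJ0]; ring
    | succ m ih =>
      refine (IsMinOfAffineOn.min_const C ?_).congr fun b _ => (hJrec m b).symm
      exact ih.affine_add_perspective (a₀ := C + s*k * J m 1) (a₁ := (q-s)*k * J m 1 - k*C)
        (u₀ := s*(1-k)) (u₁ := (q-s)*(1-k)) (w₀ := 1 - s*k) (w₁ := -((q-s)*k))
        (fun b => by ring) (fun b => by ring) (fun b => by ring) hden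
        fun b hb => posterior_mem_Icc (hbelief b hb) hk1.le (hden b hb)
  exact fun m => ⟨(hJ (m+1)).concaveOn (convex_Icc 0 1), hJ (m+1)⟩

/-- For the finite-horizon DP (indexed by time-to-go `m`, so `J 0` is the
terminal value `J_{N-1}` and `J (m+1)` corresponds to `J_l` with `l = N-1-(m+1) < N-1`):
`J 0 b = (1-k·b)·C` and
`J (m+1) b = min {C, (1-k·b)·C + (q·b+s·(1-b))·k·(J m 1) + (1-(q·b+s·(1-b))·k)·(J m (Φ b))}`,
every non-terminal value function `J (m+1)` is concave and is a finite minimum of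
affine functions (piecewise linear) on `[0,1]`. -/
theorem value_functions_concave_piecewise_linear
    (C q s k : ℝ) (hC : 0 < C) (hs0 : 0 ≤ s) (hsq : s < q) (hq1 : q ≤ 1)
    (hk0 : 0 < k) (hk1 : k < 1)
    (hden : ∀ b ∈ Set.Icc (0:ℝ) 1, 0 < 1 - (q*b + s*(1-b))*k)
    (J : ℕ → ℝ → ℝ)
    (hJ0 : ∀ b : ℝ, J 0 b = (1 - k*b)*C)
    (hJrec : ∀ m : ℕ, ∀ b : ℝ, J (m+1) b =
      min C ((1 - k*b)*C + (q*b + s*(1-b))*k * J m 1 +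
        (1 - (q*b + s*(1-b))*k) *
          J m (((q*b + s*(1-b))*(1-k)) / (1 - (q*b + s*(1-b))*k)))) :
    ∀ m : ℕ,
      ConcaveOn ℝ (Set.Icc (0:ℝ) 1) (J (m+1)) ∧
      ∃ n : ℕ, 0 < n ∧ ∃ η β : Fin n → ℝ,
        ∀ b ∈ Set.Icc (0:ℝ) 1, J (m+1) b = ⨅ i : Fin n, (η i + β i * b) :=
  value_functions_concave_piecewise_linear_general C q s k hs0 hsq hq1 hk1 hden J hJ0 hJrec
end

section
/- For the finite-horizon dynamic program J_{N-1}(b) = (1 - k·b)·C, J_l(b) = min{C, A_l(b)} with A_l(b) = (1 - k·b)·C + (q·b + s·(1-b))·k·J_{l+1}(1) + (1 - (q·b + s·(1-b))·k)·J_{l+1}(Φ(b)), the value functions are monotone in time: J_l(b) ≥ J_{l+1}(b) for all b ∈ [0,1] and all l ≤ N-2. -/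
/-!
The Bellman operator is monotone on value functions compared on `[0,1]`: both post-observation
beliefs `1` and `Φ(b)` stay in `[0,1]`, and they are weighted by the probabilities `p k` and
`1 - p k`, where `p = q b + s (1 - b)`. So `J₀ ≤ J₁` propagates to `J_m ≤ J_{m+1}` for all `m`. The base case holds since the
terminal cost `(1 - k b) C` is nonnegative, so `J₁(b)` is at least the immediate cost `(1 - k b) C`.
-/

open Set

theorem le_succ_of_le_of_monotoneOn_step {α : Type*} {S : Set α} {T : (α → ℝ) → α → ℝ}
    (hT : ∀ V W : α → ℝ, (∀ x ∈ S, V x ≤ W x) → ∀ x ∈ S, T V x ≤ T W x)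
    {J : ℕ → α → ℝ} (hJ : ∀ m, J (m + 1) = T (J m)) (h0 : ∀ x ∈ S, J 0 x ≤ J 1 x) :
    ∀ m, ∀ x ∈ S, J m x ≤ J (m + 1) x := by
  intro m
  induction m with
  | zero => exact h0
  | succ m ih =>
    have h := hT _ _ ih
    rwa [← hJ m, ← hJ (m + 1)] at h

theorem convex_comb_mem_unitInterval {q s b : ℝ} (hq : q ∈ Icc (0 : ℝ) 1)
    (hs : s ∈ Icc (0 : ℝ) 1) (hb : b ∈ Icc (0 : ℝ) 1) : q * b + s * (1 - b) ∈ Icc (0 : ℝ) 1 := by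
  have h := convex_Icc (0 : ℝ) 1 hq hs hb.1 (sub_nonneg.2 hb.2) (add_sub_cancel b 1)
  simpa only [smul_eq_mul, mul_comm] using h

theorem failedAckUpdate_mem_unitInterval {p k : ℝ} (hp : p ∈ Icc (0 : ℝ) 1) (hk0 : 0 ≤ k)
    (hk1 : k ≤ 1) : p * (1 - k) / (1 - p * k) ∈ Icc (0 : ℝ) 1 := by
  have hpk : p * k ≤ 1 := mul_le_one₀ hp.2 hk0 hk1
  refine ⟨div_nonneg (mul_nonneg hp.1 (sub_nonneg.2 hk1)) (sub_nonneg.2 hpk), ?_⟩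
  exact div_le_one_of_le₀ (by nlinarith [hp.2]) (sub_nonneg.2 hpk)

/-- One stage of the dynamic program: stop at cost `C`, or explore at immediate cost `(1 - k b) C`
and continue with `V` at the belief reached after an ACK (`1`) or a failed ACK (`Φ b`). -/
noncomputable def bellman (C q s k : ℝ) (V : ℝ → ℝ) (b : ℝ) : ℝ :=
  min C ((1 - k*b)*C + (q*b + s*(1-b))*k * V 1 +
    (1 - (q*b + s*(1-b))*k) * V (((q*b + s*(1-b))*(1-k)) / (1 - (q*b + s*(1-b))*k)))

section Bellman

variable {C q s k : ℝ}

theorem bellman_le_bellman (hq : q ∈ Icc (0 : ℝ) 1) (hs : s ∈ Icc (0 : ℝ) 1) (hk0 : 0 ≤ k)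
    (hk1 : k ≤ 1) {V W : ℝ → ℝ} (hVW : ∀ x ∈ Icc (0 : ℝ) 1, V x ≤ W x) :
    ∀ b ∈ Icc (0 : ℝ) 1, bellman C q s k V b ≤ bellman C q s k W b := by
  intro b hb
  have hp := convex_comb_mem_unitInterval hq hs hb
  have hack : 0 ≤ (q*b + s*(1-b)) * k := mul_nonneg hp.1 hk0
  have hfail : 0 ≤ 1 - (q*b + s*(1-b)) * k := sub_nonneg.2 (mul_le_one₀ hp.2 hk0 hk1)
  have h1 := hVW 1 ⟨zero_le_one, le_rfl⟩
  have hΦ := hVW _ (failedAckUpdate_mem_unitInterval hp hk0 hk1)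
  unfold bellman
  gcongr

theorem immediate_cost_le_bellman (hC : 0 ≤ C) (hq : q ∈ Icc (0 : ℝ) 1) (hs : s ∈ Icc (0 : ℝ) 1)
    (hk0 : 0 ≤ k) (hk1 : k ≤ 1) {V : ℝ → ℝ} (hV : ∀ x ∈ Icc (0 : ℝ) 1, 0 ≤ V x) :
    ∀ b ∈ Icc (0 : ℝ) 1, (1 - k*b) * C ≤ bellman C q s k V b := by
  intro b hb
  have hp := convex_comb_mem_unitInterval hq hs hb
  have hack : 0 ≤ (q*b + s*(1-b)) * k := mul_nonneg hp.1 hk0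
  have hfail : 0 ≤ 1 - (q*b + s*(1-b)) * k := sub_nonneg.2 (mul_le_one₀ hp.2 hk0 hk1)
  have h1 := hV 1 ⟨zero_le_one, le_rfl⟩
  have hΦ := hV _ (failedAckUpdate_mem_unitInterval hp hk0 hk1)
  refine le_min ?_ ?_
  · nlinarith [mul_nonneg (mul_nonneg hk0 hb.1) hC]
  · nlinarith [mul_nonneg hack h1, mul_nonneg hfail hΦ]

end Bellman

/-- `J` is indexed by time to go: `J m` is the paper's `J_{N-1-m}`. -/
theorem value_functions_monotone_in_time_general
    (C q s k : ℝ) (hC : 0 < C) (hs0 : 0 ≤ s) (hsq : s < q) (hq1 : q ≤ 1)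
    (hk0 : 0 < k) (hk1 : k < 1)
    (J : ℕ → ℝ → ℝ) (A : ℕ → ℝ → ℝ)
    (hJ0 : ∀ b : ℝ, J 0 b = (1 - k*b)*C)
    (hA : ∀ m : ℕ, ∀ b : ℝ, A m b =
      (1 - k*b)*C + (q*b + s*(1-b))*k * J m 1 +
        (1 - (q*b + s*(1-b))*k) *
          J m (((q*b + s*(1-b))*(1-k)) / (1 - (q*b + s*(1-b))*k)))
    (hJrec : ∀ m : ℕ, ∀ b : ℝ, J (m+1) b = min C (A m b)) :
    ∀ m : ℕ, ∀ b ∈ Set.Icc (0:ℝ) 1, J m b ≤ J (m+1) b := by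
  have hq : q ∈ Icc (0 : ℝ) 1 := ⟨hs0.trans hsq.le, hq1⟩
  have hs : s ∈ Icc (0 : ℝ) 1 := ⟨hs0, hsq.le.trans hq1⟩
  have hstep : ∀ m, J (m + 1) = bellman C q s k (J m) := fun m ↦ by
    funext b
    rw [hJrec, hA]
    rfl
  have hJ0_nonneg : ∀ x ∈ Icc (0 : ℝ) 1, 0 ≤ J 0 x := fun x hx ↦ by
    rw [hJ0]
    nlinarith [mul_le_one₀ hk1.le hx.1 hx.2]
  refine le_succ_of_le_of_monotoneOn_step
    (fun _ _ ↦ bellman_le_bellman hq hs hk0.le hk1.le) hstep fun b hb ↦ ?_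
  rw [hstep 0, hJ0 b]
  exact immediate_cost_le_bellman hC.le hq hs hk0.le hk1.le hJ0_nonneg b hb

/-- Monotonicity in time of the value functions. With time-to-go
indexing (`J 0` = terminal `J_{N-1}`), the claim `J_l(b) ≥ J_{l+1}(b)` for all
`l ≤ N-2` reads: `J (m+1) b ≥ J m b` for all `m` and all `b ∈ [0,1]`. -/
theorem value_functions_monotone_in_time
    (C q s k : ℝ) (hC : 0 < C) (hs0 : 0 ≤ s) (hsq : s < q) (hq1 : q ≤ 1)
    (hk0 : 0 < k) (hk1 : k < 1)
    (hden : ∀ b ∈ Set.Icc (0:ℝ) 1, 0 < 1 - (q*b + s*(1-b))*k)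
    (J : ℕ → ℝ → ℝ) (A : ℕ → ℝ → ℝ)
    (hJ0 : ∀ b : ℝ, J 0 b = (1 - k*b)*C)
    (hA : ∀ m : ℕ, ∀ b : ℝ, A m b =
      (1 - k*b)*C + (q*b + s*(1-b))*k * J m 1 +
        (1 - (q*b + s*(1-b))*k) *
          J m (((q*b + s*(1-b))*(1-k)) / (1 - (q*b + s*(1-b))*k)))
    (hJrec : ∀ m : ℕ, ∀ b : ℝ, J (m+1) b = min C (A m b)) :
    ∀ m : ℕ, ∀ b ∈ Set.Icc (0:ℝ) 1, J m b ≤ J (m+1) b :=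
  value_functions_monotone_in_time_general C q s k hC hs0 hsq hq1 hk0 hk1 J A hJ0 hA hJrec
end

section
/- With A_l defined by A_l(b) = (1 - k·b)·C + (q·b + s·(1-b))·k·J_{l+1}(1) + (1 - (q·b + s·(1-b))·k)·J_{l+1}(Φ(b)) and J_l(b) = min{C, A_l(b)}, the continuation-cost functions are monotone in time: A_l(b) ≥ A_{l+1}(b) for all b ∈ [0,1] and all valid l. -/
/-!
The value functions increase with the time to go: `J 0 ≤ J 1` on `[0,1]` because the
terminal cost `(1 - k b) C` is below both `C` and the one-step continuation cost, which
exceeds it by `(1 - π k) C ≥ 0`. The continuation cost is a nonnegative combination of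
values of the continuation value function at `1` and at the updated belief `Φ(b) ∈ [0,1]`,
so it is monotone in that function, and `J (m+1) = min C (A m)` propagates the inequality
by induction.
-/

open Set

/-- The continuation cost at belief `b` built from the continuation value `V`, where
`π = q b + s (1 - b)` is the predicted probability that the link is good. -/
noncomputable def continuationCost (C k π : ℝ) (V : ℝ → ℝ) (b : ℝ) : ℝ :=
  (1 - k*b)*C + π*k * V 1 + (1 - π*k) * V (π*(1-k) / (1 - π*k))

lemma predicted_mem_Icc {q s b : ℝ} (hs0 : 0 ≤ s) (hsq : s ≤ q) (hq1 : q ≤ 1)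
    (hb : b ∈ Icc (0:ℝ) 1) : q*b + s*(1-b) ∈ Icc (0:ℝ) 1 := by
  obtain ⟨hb0, hb1⟩ := hb
  constructor <;> nlinarith

section

variable {k π : ℝ}

lemma one_sub_mul_pos (hπ : π ∈ Icc (0:ℝ) 1) (hk0 : 0 ≤ k) (hk1 : k < 1) :
    0 < 1 - π*k := by
  nlinarith [mul_le_of_le_one_left hk0 hπ.2]

lemma updatedBelief_mem_Icc (hπ : π ∈ Icc (0:ℝ) 1) (hk0 : 0 ≤ k) (hk1 : k < 1) :
    π*(1-k) / (1 - π*k) ∈ Icc (0:ℝ) 1 := by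
  have hd := one_sub_mul_pos hπ hk0 hk1
  refine ⟨div_nonneg (mul_nonneg hπ.1 (by linarith)) hd.le, ?_⟩
  rw [div_le_one hd]
  linarith [hπ.2]

lemma continuationCost_mono {C : ℝ} {V W : ℝ → ℝ} (b : ℝ) (hπ : π ∈ Icc (0:ℝ) 1)
    (hk0 : 0 ≤ k) (hk1 : k < 1) (hVW : ∀ x ∈ Icc (0:ℝ) 1, V x ≤ W x) :
    continuationCost C k π V b ≤ continuationCost C k π W b := by
  have hπk : 0 ≤ π*k := mul_nonneg hπ.1 hk0
  have hd := (one_sub_mul_pos hπ hk0 hk1).le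
  unfold continuationCost
  gcongr
  · exact hVW 1 ⟨zero_le_one, le_rfl⟩
  · exact hVW _ (updatedBelief_mem_Icc hπ hk0 hk1)

lemma continuationCost_terminal (C b : ℝ) (hπ : π ∈ Icc (0:ℝ) 1) (hk0 : 0 ≤ k)
    (hk1 : k < 1) :
    continuationCost C k π (fun x => (1 - k*x)*C) b = (1 - k*b)*C + (1 - π*k)*C := by
  have hΦ : (1 - π*k) * (π*(1-k) / (1 - π*k)) = π*(1-k) :=
    mul_div_cancel₀ _ (one_sub_mul_pos hπ hk0 hk1).ne'
  unfold continuationCost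
  linear_combination (-k*C) * hΦ

lemma terminalCost_le_min_continuationCost {C b : ℝ} (hC : 0 ≤ C) (hb : 0 ≤ b)
    (hπ : π ∈ Icc (0:ℝ) 1) (hk0 : 0 ≤ k) (hk1 : k < 1) :
    (1 - k*b)*C ≤ min C (continuationCost C k π (fun x => (1 - k*x)*C) b) := by
  rw [continuationCost_terminal C b hπ hk0 hk1]
  have hkb : 0 ≤ k*b := mul_nonneg hk0 hb
  have hd := (one_sub_mul_pos hπ hk0 hk1).le
  exact le_min (by nlinarith) (le_add_of_nonneg_right (mul_nonneg hd hC))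

end

/-- Time-to-go indexing: `J 0` is the terminal `J_{N-1}` and `A m` is built from `J m`,
so `A_l(b) ≥ A_{l+1}(b)` reads `A m b ≤ A (m+1) b`. -/
theorem continuation_costs_monotone_in_time_general
    (C q s k : ℝ) (hC : 0 < C) (hs0 : 0 ≤ s) (hsq : s < q) (hq1 : q ≤ 1)
    (hk0 : 0 < k) (hk1 : k < 1)
    (J : ℕ → ℝ → ℝ) (A : ℕ → ℝ → ℝ)
    (hJ0 : ∀ b : ℝ, J 0 b = (1 - k*b)*C)
    (hA : ∀ m : ℕ, ∀ b : ℝ, A m b =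
      (1 - k*b)*C + (q*b + s*(1-b))*k * J m 1 +
        (1 - (q*b + s*(1-b))*k) *
          J m (((q*b + s*(1-b))*(1-k)) / (1 - (q*b + s*(1-b))*k)))
    (hJrec : ∀ m : ℕ, ∀ b : ℝ, J (m+1) b = min C (A m b)) :
    ∀ m : ℕ, ∀ b ∈ Set.Icc (0:ℝ) 1, A m b ≤ A (m+1) b := by
  have hA' (m : ℕ) (b : ℝ) : A m b = continuationCost C k (q*b + s*(1-b)) (J m) b := hA m b
  have hπ (b : ℝ) (hb : b ∈ Icc (0:ℝ) 1) := predicted_mem_Icc hs0 hsq.le hq1 hb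
  have hJmono (m : ℕ) : ∀ x ∈ Icc (0:ℝ) 1, J m x ≤ J (m+1) x := by
    induction m with
    | zero =>
      intro x hx
      rw [hJrec, hA', funext hJ0]
      exact terminalCost_le_min_continuationCost hC.le hx.1 (hπ x hx) hk0.le hk1
    | succ m ih =>
      intro x hx
      rw [hJrec, hJrec, hA', hA']
      exact min_le_min_left C (continuationCost_mono x (hπ x hx) hk0.le hk1 ih)
  intro m b hb
  rw [hA', hA']
  exact continuationCost_mono b (hπ b hb) hk0.le hk1 (hJmono m)

/-- Monotonicity in time of the continuation costs. With time-to-go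
indexing (`J 0` = terminal `J_{N-1}`, and `A m` the continuation cost built from
continuation value `J m`), the claim `A_l(b) ≥ A_{l+1}(b)` reads:
`A (m+1) b ≥ A m b` for all `m` and `b ∈ [0,1]`. -/
theorem continuation_costs_monotone_in_time
    (C q s k : ℝ) (hC : 0 < C) (hs0 : 0 ≤ s) (hsq : s < q) (hq1 : q ≤ 1)
    (hk0 : 0 < k) (hk1 : k < 1)
    (hden : ∀ b ∈ Set.Icc (0:ℝ) 1, 0 < 1 - (q*b + s*(1-b))*k)
    (J : ℕ → ℝ → ℝ) (A : ℕ → ℝ → ℝ)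
    (hJ0 : ∀ b : ℝ, J 0 b = (1 - k*b)*C)
    (hA : ∀ m : ℕ, ∀ b : ℝ, A m b =
      (1 - k*b)*C + (q*b + s*(1-b))*k * J m 1 +
        (1 - (q*b + s*(1-b))*k) *
          J m (((q*b + s*(1-b))*(1-k)) / (1 - (q*b + s*(1-b))*k)))
    (hJrec : ∀ m : ℕ, ∀ b : ℝ, J (m+1) b = min C (A m b)) :
    ∀ m : ℕ, ∀ b ∈ Set.Icc (0:ℝ) 1, A m b ≤ A (m+1) b :=
  continuation_costs_monotone_in_time_general C q s k hC hs0 hsq hq1 hk0 hk1 J A hJ0 hA hJrec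
end

section
/- Let π₁ = Φ(1) and π_{m+1} = Φ(π_m), where Φ is the failed-ACK belief update with 0 ≤ s < q < 1 and k ∈ (0,1). Then (π_m) is strictly decreasing and converges to the unique fixed point b* ∈ [0,1) of Φ, which satisfies b* < π_m for all m. Consequently, for any threshold ᾱ with b* < ᾱ < π₁, there exists a smallest integer r ≥ 1 such that π_r ≤ ᾱ. -/
open Filter Set Function

/-! Writing `p b = q b + s (1 - b)`, the update is `Φ b = (1 - k) p / (1 - k p)`: an increasing
Möbius map of the increasing affine map `p`, sending `[0, 1]` into `[0, 1)`. Hence the orbit of `1`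
decreases to a fixed point. Fixed points are the roots of a quadratic with positive leading
coefficient that is negative at `1`, so exactly one of them lies below `1`. -/

section orbit

variable {f : ℝ → ℝ} {π : ℕ → ℝ} {a b : ℝ}

theorem orbit_mem_Ico (hmaps : MapsTo f (Icc a b) (Ico a b)) (hab : a ≤ b)
    (h0 : π 0 = f b) (hrec : ∀ m, π (m + 1) = f (π m)) (m : ℕ) : π m ∈ Ico a b := by
  induction m with
  | zero => exact h0 ▸ hmaps ⟨hab, le_rfl⟩
  | succ n ih => exact (hrec n).symm ▸ hmaps (Ico_subset_Icc_self ih)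

theorem orbit_strictAnti (hmono : StrictMonoOn f (Icc a b))
    (hmaps : MapsTo f (Icc a b) (Ico a b)) (hab : a ≤ b)
    (h0 : π 0 = f b) (hrec : ∀ m, π (m + 1) = f (π m)) : StrictAnti π := by
  have hmem := orbit_mem_Ico hmaps hab h0 hrec
  refine strictAnti_nat_of_succ_lt fun m => ?_
  induction m with
  | zero =>
    calc π (0 + 1) = f (π 0) := hrec 0
      _ < f b := hmono (Ico_subset_Icc_self (hmem 0)) ⟨hab, le_rfl⟩ (hmem 0).2
      _ = π 0 := h0.symm
  | succ n ih =>
    calc π (n + 1 + 1) = f (π (n + 1)) := hrec (n + 1)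
      _ < f (π n) := hmono (Ico_subset_Icc_self (hmem (n + 1))) (Ico_subset_Icc_self (hmem n)) ih
      _ = π (n + 1) := (hrec n).symm

theorem isFixedPt_of_tendsto_orbit (hcont : ContinuousOn f (Icc a b))
    (hmem : ∀ m, π m ∈ Icc a b) (hrec : ∀ m, π (m + 1) = f (π m)) {L : ℝ}
    (hL : L ∈ Icc a b) (hlim : Tendsto π atTop (nhds L)) : IsFixedPt f L := by
  have hlim_within : Tendsto π atTop (nhdsWithin L (Icc a b)) :=
    tendsto_nhdsWithin_iff.2 ⟨hlim, Eventually.of_forall hmem⟩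
  have hlim_succ : Tendsto (fun m => f (π m)) atTop (nhds L) := by
    simpa only [Function.comp_def, hrec] using hlim.comp (tendsto_add_atTop_nat 1)
  exact tendsto_nhds_unique ((hcont L hL).tendsto.comp hlim_within) hlim_succ

end orbit

theorem exists_least_succ_index_le {π : ℕ → ℝ} {L α : ℝ} (hlim : Tendsto π atTop (nhds L))
    (hLα : L < α) :
    ∃ r : ℕ, 1 ≤ r ∧ π (r - 1) ≤ α ∧ ∀ r' : ℕ, 1 ≤ r' → π (r' - 1) ≤ α → r ≤ r' := by
  classical
  have hex : ∃ n, π n ≤ α := ((hlim.eventually (eventually_lt_nhds hLα)).exists).imp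
    fun _ h => h.le
  refine ⟨Nat.find hex + 1, by omega, Nat.find_spec hex, fun r' hr' hπr' => ?_⟩
  have := Nat.find_min' hex hπr'
  omega

theorem eq_of_quadratic_roots_lt_one {A B C x y : ℝ} (hA : 0 < A) (h1 : A + B + C < 0)
    (hx : A * x ^ 2 + B * x + C = 0) (hy : A * y ^ 2 + B * y + C = 0) (hx1 : x < 1)
    (hy1 : y < 1) : x = y := by
  by_contra hne
  have hsum : A * (x + y) + B = 0 := by
    have : (x - y) * (A * (x + y) + B) = 0 := by linear_combination hx - hy
    exact (mul_eq_zero.1 this).resolve_left (sub_ne_zero.2 hne)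
  -- Vieta: the quadratic is `A (t - x) (t - y)`, positive at `t = 1`.
  have hvalue : A + B + C = A * ((1 - x) * (1 - y)) := by
    linear_combination hx - (x - 1) * hsum
  nlinarith [mul_pos hA (mul_pos (sub_pos.2 hx1) (sub_pos.2 hy1))]

noncomputable def failedAckUpdate (q s k b : ℝ) : ℝ :=
  ((q*b + s*(1-b))*(1-k)) / ((q*b + s*(1-b))*(1-k) + (1-q)*b + (1-s)*(1-b))

section failedAckUpdate

variable {q s k : ℝ}

theorem failedAckUpdate_eq (b : ℝ) :
    failedAckUpdate q s k b = (1 - k) * (q*b + s*(1-b)) / (1 - k * (q*b + s*(1-b))) := by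
  unfold failedAckUpdate
  ring_nf

theorem failedAckUpdate_denom_pos (hsq : s < q) (hq1 : q < 1) (hk0 : 0 < k) (hk1 : k < 1)
    {b : ℝ} (hb : b ∈ Icc 0 1) : 0 < 1 - k * (q*b + s*(1-b)) := by
  obtain ⟨hb0, hb1⟩ := hb
  nlinarith [mul_nonneg (sub_nonneg.2 hb1) (sub_pos.2 hsq).le]

theorem mapsTo_failedAckUpdate (hs0 : 0 ≤ s) (hsq : s < q) (hq1 : q < 1) (hk0 : 0 < k)
    (hk1 : k < 1) : MapsTo (failedAckUpdate q s k) (Icc 0 1) (Ico 0 1) := by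
  intro b hb
  have hden := failedAckUpdate_denom_pos hsq hq1 hk0 hk1 hb
  obtain ⟨hb0, hb1⟩ := hb
  have hp0 : 0 ≤ q*b + s*(1-b) := by nlinarith
  have hp1 : q*b + s*(1-b) < 1 := by nlinarith
  rw [mem_Ico, failedAckUpdate_eq, div_lt_one hden]
  exact ⟨div_nonneg (mul_nonneg (sub_pos.2 hk1).le hp0) hden.le, by nlinarith⟩

theorem strictMonoOn_failedAckUpdate (hsq : s < q) (hq1 : q < 1) (hk0 : 0 < k) (hk1 : k < 1) :
    StrictMonoOn (failedAckUpdate q s k) (Icc 0 1) := by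
  intro a ha b hb hab
  rw [failedAckUpdate_eq, failedAckUpdate_eq,
    div_lt_div_iff₀ (failedAckUpdate_denom_pos hsq hq1 hk0 hk1 ha)
      (failedAckUpdate_denom_pos hsq hq1 hk0 hk1 hb)]
  nlinarith [mul_pos (mul_pos (sub_pos.2 hk1) (sub_pos.2 hsq)) (sub_pos.2 hab)]

theorem continuousOn_failedAckUpdate (hsq : s < q) (hq1 : q < 1) (hk0 : 0 < k) (hk1 : k < 1) :
    ContinuousOn (failedAckUpdate q s k) (Icc 0 1) := by
  simp_rw [funext failedAckUpdate_eq]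
  exact ContinuousOn.div (by fun_prop) (by fun_prop)
    fun b hb => (failedAckUpdate_denom_pos hsq hq1 hk0 hk1 hb).ne'

theorem failedAckUpdate_fixedPt_quadratic (hsq : s < q) (hq1 : q < 1) (hk0 : 0 < k)
    (hk1 : k < 1) {b : ℝ} (hb : b ∈ Icc 0 1) (hfix : failedAckUpdate q s k b = b) :
    k*(q-s) * b^2 + ((1-k)*(q-s) + k*s - 1) * b + (1-k)*s = 0 := by
  rw [failedAckUpdate_eq, div_eq_iff (failedAckUpdate_denom_pos hsq hq1 hk0 hk1 hb).ne'] at hfix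
  linear_combination hfix

theorem failedAckUpdate_fixedPt_unique (hsq : s < q) (hq1 : q < 1) (hk0 : 0 < k)
    (hk1 : k < 1) {b c : ℝ} (hb : b ∈ Ico 0 1) (hc : c ∈ Ico 0 1)
    (hbfix : failedAckUpdate q s k b = b) (hcfix : failedAckUpdate q s k c = c) : b = c :=
  eq_of_quadratic_roots_lt_one (mul_pos hk0 (sub_pos.2 hsq)) (by linarith)
    (failedAckUpdate_fixedPt_quadratic hsq hq1 hk0 hk1 (Ico_subset_Icc_self hb) hbfix)
    (failedAckUpdate_fixedPt_quadratic hsq hq1 hk0 hk1 (Ico_subset_Icc_self hc) hcfix) hb.2 hc.2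

end failedAckUpdate

/-- Let `Φ` be the failed-ACK belief update with `0 ≤ s < q < 1`,
`k ∈ (0,1)`, and let `π (m)` (indexed here from `0`, so `π 0 = Φ 1` is the paper's
`π₁` and `π m` is the paper's `π_{m+1}`) be the belief after successive ACK failures
starting from belief `1`. Then `(π m)` is strictly decreasing and converges to the
unique fixed point `b* ∈ [0,1)` of `Φ`, which satisfies `b* < π m` for all `m`;
consequently, for any threshold `ᾱ` with `b* < ᾱ < π 0` there is a smallest integer
`r ≥ 1` such that `π (r-1) ≤ ᾱ` (i.e. the paper's `π_r ≤ ᾱ`). -/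
theorem successive_ack_failures_reach_threshold
    (q s k : ℝ) (hs0 : 0 ≤ s) (hsq : s < q) (hq1 : q < 1) (hk0 : 0 < k) (hk1 : k < 1)
    (Φ : ℝ → ℝ)
    (hΦ : ∀ b : ℝ, Φ b =
      ((q*b + s*(1-b))*(1-k)) /
        ((q*b + s*(1-b))*(1-k) + (1-q)*b + (1-s)*(1-b)))
    (π : ℕ → ℝ) (hπ0 : π 0 = Φ 1) (hπrec : ∀ m, π (m+1) = Φ (π m)) :
    StrictAnti π ∧
    ∃ bstar ∈ Set.Ico (0:ℝ) 1,
      Φ bstar = bstar ∧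
      (∀ b ∈ Set.Ico (0:ℝ) 1, Φ b = b → b = bstar) ∧
      Tendsto π atTop (nhds bstar) ∧
      (∀ m, bstar < π m) ∧
      (∀ αbar : ℝ, bstar < αbar → αbar < π 0 →
        ∃ r : ℕ, 1 ≤ r ∧ π (r-1) ≤ αbar ∧
          ∀ r' : ℕ, 1 ≤ r' → π (r'-1) ≤ αbar → r ≤ r') := by
  obtain rfl : Φ = failedAckUpdate q s k := funext hΦ
  have hmaps := mapsTo_failedAckUpdate hs0 hsq hq1 hk0 hk1
  have hmem := orbit_mem_Ico hmaps zero_le_one hπ0 hπrec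
  have hanti := orbit_strictAnti (strictMonoOn_failedAckUpdate hsq hq1 hk0 hk1) hmaps
    zero_le_one hπ0 hπrec
  have hbdd : BddBelow (range π) := ⟨0, forall_mem_range.2 fun m => (hmem m).1⟩
  set bstar := ⨅ m, π m
  have hlim : Tendsto π atTop (nhds bstar) := tendsto_atTop_ciInf hanti.antitone hbdd
  have hlt : ∀ m, bstar < π m := fun m => (ciInf_le hbdd (m + 1)).trans_lt (hanti m.lt_succ_self)
  have hbstar : bstar ∈ Ico 0 1 := ⟨le_ciInf fun m => (hmem m).1, (hlt 0).trans (hmem 0).2⟩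
  have hfix := isFixedPt_of_tendsto_orbit (continuousOn_failedAckUpdate hsq hq1 hk0 hk1)
    (fun m => Ico_subset_Icc_self (hmem m)) hπrec (Ico_subset_Icc_self hbstar) hlim
  exact ⟨hanti, bstar, hbstar, hfix,
    fun b hb hbfix => failedAckUpdate_fixedPt_unique hsq hq1 hk0 hk1 hb hbstar hbfix hfix,
    hlim, hlt, fun _ hα _ => exists_least_succ_index_le hlim hα⟩
end
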